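/- Let F : ℝᵐ → ℝⁿ be any (possibly discontinuous) function. Define its set-valued closure F̄(x) = {y : (x, y) ∈ closure(𝒢_F)}, where 𝒢_F is the graph of F. Then the graph of F̄ equals the closure of 𝒢_F, is closed, and F(x) ∈ F̄(x) for every x; consequently there exists a 1-Lipschitz g : ℝ^{m+n} → ℝ with argmin_y g(x, y) = F̄(x) for all x. -/

import Mathlib

open Metric

noncomputable abbrev E (n : ℕ) : Type := EuclideanSpace ℝ (Fin n)
noncomputable abbrev P (m n : ℕ) : Type := WithLp 2 (E m × E n)

theorem setOf_forall_infDist_le_eq_preimage {X Y : Type*} [PseudoMetricSpace X] {C : Set X}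
    (hC : IsClosed C) (f : Y → X) (hf : ∃ y, f y ∈ C) :
    {y | ∀ y', infDist (f y) C ≤ infDist (f y') C} = f ⁻¹' C := by
  obtain ⟨y₀, hy₀⟩ := hf
  have hne : C.Nonempty := ⟨f y₀, hy₀⟩
  ext y
  constructor
  · intro hmin
    have hzero : infDist (f y) C ≤ 0 := infDist_zero_of_mem hy₀ ▸ hmin y₀
    exact (hC.mem_iff_infDist_zero hne).2 (le_antisymm hzero infDist_nonneg)
  · intro (hy : f y ∈ C) y'
    rw [infDist_zero_of_mem hy]
    exact infDist_nonneg

/-- The set-valued closure of an arbitrary function's graph is closed, contains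
the function, and is represented by a 1-Lipschitz implicit function. -/
theorem closure_graph_implicit (m n : ℕ) (F : E m → E n)
    (Fbar : E m → Set (E n))
    (hFbar : ∀ x, Fbar x = {y : E n | (WithLp.toLp 2 (x, y) : P m n) ∈ closure {p : P m n | p.ofLp.2 = F p.ofLp.1}}) :
    {p : P m n | p.ofLp.2 ∈ Fbar p.ofLp.1} = closure {p : P m n | p.ofLp.2 = F p.ofLp.1} ∧
      IsClosed {p : P m n | p.ofLp.2 ∈ Fbar p.ofLp.1} ∧
      (∀ x, F x ∈ Fbar x) ∧
      ∃ g : P m n → ℝ, LipschitzWith 1 g ∧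
        ∀ x : E m, {y : E n | ∀ y' : E n, g (WithLp.toLp 2 (x, y) : P m n) ≤ g (WithLp.toLp 2 (x, y') : P m n)} = Fbar x := by
  set G := closure {p : P m n | p.ofLp.2 = F p.ofLp.1}
  have hgraph : {p : P m n | p.ofLp.2 ∈ Fbar p.ofLp.1} = G := by
    ext p
    simp only [hFbar, Set.mem_ofPred]
  have hF (x : E m) : (WithLp.toLp 2 (x, F x) : P m n) ∈ G := subset_closure rfl
  refine ⟨hgraph, hgraph ▸ isClosed_closure, fun x => (hFbar x).symm ▸ hF x,
    fun p => infDist p G, lipschitz_infDist_pt G, fun x => ?_⟩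
  rw [hFbar]
  exact setOf_forall_infDist_le_eq_preimage isClosed_closure _ ⟨F x, hF x⟩
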